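/- arXiv:2104.03832 — 4 statements merged into one kernel-verified Lean document; each statement's English description precedes it below -/
import Mathlib

section
/- Let M₁, M₂ and N be objects of an abelian category 𝒜 such that N is dual strongly M₁-CS-Rickart and dual strongly M₂-CS-Rickart. Then N is dual strongly (M₁ ⊞ M₂)-CS-Rickart, where M₁ ⊞ M₂ is the biproduct. -/
open CategoryTheory CategoryTheory.Limits

universe w v u

variable {C : Type u} [Category.{v} C] [Abelian C]

/-- A morphism is a section if it is a split monomorphism. -/
def IsSection {K M : C} (s : K ⟶ M) : Prop := ∃ p : M ⟶ K, s ≫ p = 𝟙 K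

/-- A morphism is a retraction if it is a split epimorphism. -/
def IsRetraction {M P : C} (r : M ⟶ P) : Prop := ∃ s : P ⟶ M, s ≫ r = 𝟙 P

/-- An essential monomorphism: a mono `e` such that any `h` with `e ≫ h` mono is mono. -/
def EssentialMono {K L : C} (e : K ⟶ L) : Prop :=
  Mono e ∧ ∀ ⦃P : C⦄ (h : L ⟶ P), Mono (e ≫ h) → Mono h

/-- A superfluous epimorphism: an epi `t` such that any `h` with `h ≫ t` epi is epi. -/
def SuperfluousEpi {P Q : C} (t : P ⟶ Q) : Prop :=
  Epi t ∧ ∀ ⦃X : C⦄ (h : X ⟶ P), Epi (h ≫ t) → Epi h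

/-- A fully invariant morphism into `M`: every endomorphism of `M` restricts along it. -/
def FullyInvariant {L M : C} (s : L ⟶ M) : Prop :=
  ∀ h : M ⟶ M, ∃ α : L ⟶ L, s ≫ h = α ≫ s

/-- A fully coinvariant morphism out of `N`: every endomorphism of `N` descends along it. -/
def FullyCoinvariant {N P : C} (r : N ⟶ P) : Prop :=
  ∀ h : N ⟶ N, ∃ β : P ⟶ P, h ≫ r = r ≫ β

/-- An object is weak duo if every section into it is fully invariant. -/
def WeakDuo (X : C) : Prop := ∀ ⦃K : C⦄ (s : K ⟶ X), IsSection s → FullyInvariant s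

/-- `N` is `M`-CS-Rickart. -/
def CSRickart (M N : C) : Prop :=
  ∀ f : M ⟶ N, ∃ (L : C) (e : kernel f ⟶ L) (s : L ⟶ M),
    EssentialMono e ∧ IsSection s ∧ kernel.ι f = e ≫ s

/-- `N` is strongly `M`-CS-Rickart. -/
def StronglyCSRickart (M N : C) : Prop :=
  ∀ f : M ⟶ N, ∃ (L : C) (e : kernel f ⟶ L) (s : L ⟶ M),
    EssentialMono e ∧ IsSection s ∧ FullyInvariant s ∧ kernel.ι f = e ≫ s

/-- `N` is dual `M`-CS-Rickart. -/
def DualCSRickart (M N : C) : Prop :=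
  ∀ f : M ⟶ N, ∃ (P : C) (r : N ⟶ P) (t : P ⟶ cokernel f),
    IsRetraction r ∧ SuperfluousEpi t ∧ cokernel.π f = r ≫ t

/-- `N` is dual strongly `M`-CS-Rickart. -/
def DualStronglyCSRickart (M N : C) : Prop :=
  ∀ f : M ⟶ N, ∃ (P : C) (r : N ⟶ P) (t : P ⟶ cokernel f),
    IsRetraction r ∧ FullyCoinvariant r ∧ SuperfluousEpi t ∧ cokernel.π f = r ≫ t

/-- `N` is strongly `M`-Rickart. -/
def StronglyRickart (M N : C) : Prop :=
  ∀ f : M ⟶ N, IsSection (kernel.ι f) ∧ FullyInvariant (kernel.ι f)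

/-- `N` is dual strongly `M`-Rickart. -/
def DualStronglyRickart (M N : C) : Prop :=
  ∀ f : M ⟶ N, IsRetraction (cokernel.π f) ∧ FullyCoinvariant (cokernel.π f)

/-- `N` is `M`-𝒦-nonsingular. -/
def KNonsingular (M N : C) : Prop :=
  ∀ f : M ⟶ N, EssentialMono (kernel.ι f) → f = 0

/-- `M` is `N`-𝒯-nonsingular. -/
def TNonsingular (M N : C) : Prop :=
  ∀ f : M ⟶ N, SuperfluousEpi (cokernel.π f) → f = 0

/-- `A` is an essential subobject of `B` (in the subobject lattice of `M`). -/
def EssentialIn {M : C} (A B : Subobject M) : Prop :=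
  A ≤ B ∧ ∀ X : Subobject M, X ≤ B → X ⊓ A = ⊥ → X = ⊥

/-- A subobject is a direct summand if its inclusion splits. -/
def SubDirectSummand {M : C} (U : Subobject M) : Prop := IsSection U.arrow

/-- A subobject is fully invariant if its inclusion monomorphism is fully invariant. -/
def SubFullyInvariant {M : C} (U : Subobject M) : Prop := FullyInvariant U.arrow

/-- `M` is strictly SIP-extending. -/
def StrictlySIPExtending (M : C) : Prop :=
  ∀ A B : Subobject M,
    (∃ U, SubDirectSummand U ∧ EssentialIn A U) →
    (∃ V, SubDirectSummand V ∧ EssentialIn B V) →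
    ∃ W, SubDirectSummand W ∧ SubFullyInvariant W ∧ EssentialIn (A ⊓ B) W

/-- `M` is strictly SSIP-extending: for any family of subobjects, each essential in a
direct summand, any greatest lower bound of the family is essential in a fully invariant
direct summand. -/
def StrictlySSIPExtending (M : C) : Prop :=
  ∀ ⦃ι : Type w⦄ (A : ι → Subobject M) (K : Subobject M), IsGLB (Set.range A) K →
    (∀ i, ∃ U, SubDirectSummand U ∧ EssentialIn (A i) U) →
    ∃ W, SubDirectSummand W ∧ SubFullyInvariant W ∧ EssentialIn K W

/-- An object is indecomposable: nonzero, and any biproduct decomposition is trivial. -/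
def IndecomposableObj (M : C) : Prop :=
  ¬ IsZero M ∧ ∀ (A B : C), Nonempty (M ≅ A ⊞ B) → IsZero A ∨ IsZero B


namespace Stmt15Aux

variable {C : Type u} [Category.{v} C] [Abelian C]

/-- `u : S ⟶ Y` has "small" image in `Y`. -/
def Small {S Y : C} (u : S ⟶ Y) : Prop :=
  ∀ ⦃X : C⦄ (h : X ⟶ Y), Epi (h ≫ cokernel.π u) → Epi h

theorem small_of_superfluousEpi {P Q : C} {t : P ⟶ Q} (ht : SuperfluousEpi t) :
    Small (kernel.ι t) := by
  intro X h hh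
  have hm : cokernel.π (kernel.ι t) ≫ cokernel.desc (kernel.ι t) t (kernel.condition t) = t :=
    cokernel.π_desc _ _ _
  haveI : Epi t := ht.1
  haveI : Epi (cokernel.desc (kernel.ι t) t (kernel.condition t)) := epi_of_epi_fac hm
  haveI := hh
  refine ht.2 h ?_
  rw [← hm, ← Category.assoc]
  exact epi_comp _ _

theorem small_of_factor {S S' Y : C} {u : S ⟶ Y} {v : S' ⟶ Y} (w : S ⟶ S')
    (hw : u = w ≫ v) (hv : Small v) : Small u := by
  intro X h hh
  have h0 : u ≫ cokernel.π v = 0 := by rw [hw, Category.assoc, cokernel.condition, comp_zero]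
  have hd : cokernel.π u ≫ cokernel.desc u (cokernel.π v) h0 = cokernel.π v :=
    cokernel.π_desc _ _ _
  haveI : Epi (cokernel.desc u (cokernel.π v) h0) := epi_of_epi_fac hd
  haveI := hh
  refine hv h ?_
  rw [← hd, ← Category.assoc]
  exact epi_comp _ _

theorem small_comp_epi {S Y Z : C} {u : S ⟶ Y} (hu : Small u) (α : Y ⟶ Z) [Epi α] :
    Small (u ≫ α) := by
  intro X h hh
  haveI hsnd : Epi (pullback.snd h α ≫ cokernel.π u) := by
    rw [Preadditive.epi_iff_cancel_zero]
    intro R c hc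
    have hud : u ≫ (cokernel.π u ≫ c) = 0 := by
      rw [← Category.assoc, cokernel.condition, zero_comp]
    have hbd : pullback.snd h α ≫ (cokernel.π u ≫ c) = 0 := by
      rw [← Category.assoc]; exact hc
    have hkd : kernel.ι α ≫ (cokernel.π u ≫ c) = 0 := by
      have hl : pullback.lift (0 : kernel α ⟶ X) (kernel.ι α)
          (by rw [zero_comp, kernel.condition]) ≫ pullback.snd h α = kernel.ι α :=
        pullback.lift_snd _ _ _
      rw [← hl, Category.assoc, hbd, comp_zero]
    have hαd : α ≫ Abelian.epiDesc α (cokernel.π u ≫ c) hkd = cokernel.π u ≫ c :=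
      Abelian.comp_epiDesc _ _ _
    have hhd : h ≫ Abelian.epiDesc α (cokernel.π u ≫ c) hkd = 0 := by
      apply zero_of_epi_comp (pullback.fst h α)
      rw [← Category.assoc, pullback.condition, Category.assoc, hαd, hbd]
    have huα : (u ≫ α) ≫ Abelian.epiDesc α (cokernel.π u ≫ c) hkd = 0 := by
      rw [Category.assoc, hαd, hud]
    have hdesc : cokernel.π (u ≫ α) ≫ cokernel.desc _ _ huα =
        Abelian.epiDesc α (cokernel.π u ≫ c) hkd := cokernel.π_desc _ _ _
    haveI := hh
    have h0 : cokernel.desc _ _ huα = 0 := by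
      apply zero_of_epi_comp (h ≫ cokernel.π (u ≫ α))
      rw [Category.assoc, hdesc, hhd]
    have hd0 : Abelian.epiDesc α (cokernel.π u ≫ c) hkd = 0 := by
      rw [← hdesc, h0, comp_zero]
    have : cokernel.π u ≫ c = 0 := by rw [← hαd, hd0, comp_zero]
    exact zero_of_epi_comp (cokernel.π u) this
  haveI hs : Epi (pullback.snd h α) := hu _ hsnd
  haveI : Epi (pullback.fst h α ≫ h) := by
    rw [pullback.condition]; exact epi_comp _ _
  exact epi_of_epi (pullback.fst h α) h

theorem small_desc {S T Y : C} {u : S ⟶ Y} {v : T ⟶ Y} (hu : Small u) (hv : Small v) :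
    Small (biprod.desc u v) := by
  intro X h hh
  haveI := hh
  have h1 : Epi (biprod.desc h u ≫ cokernel.π v) := by
    rw [Preadditive.epi_iff_cancel_zero]
    intro R c hc
    have hm : biprod.desc h u ≫ (cokernel.π v ≫ c) = 0 := by
      rw [← Category.assoc]; exact hc
    have hhm : h ≫ (cokernel.π v ≫ c) = 0 := by
      rw [← biprod.inl_desc h u, Category.assoc, hm, comp_zero]
    have hum : u ≫ (cokernel.π v ≫ c) = 0 := by
      rw [← biprod.inr_desc h u, Category.assoc, hm, comp_zero]
    have hvm : v ≫ (cokernel.π v ≫ c) = 0 := by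
      rw [← Category.assoc, cokernel.condition, zero_comp]
    have hdm : biprod.desc u v ≫ (cokernel.π v ≫ c) = 0 := by
      apply biprod.hom_ext'
      · simpa using hum
      · simpa using hvm
    have hfac : cokernel.π (biprod.desc u v) ≫ cokernel.desc _ _ hdm = cokernel.π v ≫ c :=
      cokernel.π_desc _ _ _
    have h0 : cokernel.desc _ _ hdm = 0 := by
      apply zero_of_epi_comp (h ≫ cokernel.π (biprod.desc u v))
      rw [Category.assoc, hfac, hhm]
    have : cokernel.π v ≫ c = 0 := by rw [← hfac, h0, comp_zero]
    exact zero_of_epi_comp (cokernel.π v) this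
  haveI hd1 : Epi (biprod.desc h u) := hv _ h1
  have h2 : Epi (h ≫ cokernel.π u) := by
    rw [Preadditive.epi_iff_cancel_zero]
    intro R c hc
    have hm : h ≫ (cokernel.π u ≫ c) = 0 := by rw [← Category.assoc]; exact hc
    have hum : u ≫ (cokernel.π u ≫ c) = 0 := by
      rw [← Category.assoc, cokernel.condition, zero_comp]
    have hdm : biprod.desc h u ≫ (cokernel.π u ≫ c) = 0 := by
      apply biprod.hom_ext'
      · simpa using hm
      · simpa using hum
    have : cokernel.π u ≫ c = 0 := zero_of_epi_comp (biprod.desc h u) hdm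
    exact zero_of_epi_comp (cokernel.π u) this
  exact hu _ h2

end Stmt15Aux

theorem stmt15 (M₁ M₂ N : C) (h₁ : DualStronglyCSRickart M₁ N)
    (h₂ : DualStronglyCSRickart M₂ N) : DualStronglyCSRickart (M₁ ⊞ M₂) N := by
  intro f
  obtain ⟨P₁, r₁, t₁, ⟨s₁, hs₁⟩, fc₁, st₁, hc₁⟩ := h₁ (biprod.inl ≫ f)
  obtain ⟨P₂, r₂, t₂, ⟨s₂, hs₂⟩, fc₂, st₂, hc₂⟩ := h₂ ((biprod.inr ≫ f) ≫ r₁ ≫ s₁)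
  have hs₁re := reassoc_of% hs₁
  have hs₂re := reassoc_of% hs₂
  -- kernel conditions, reassociated
  have hq₁z : ∀ {Z : C} (x : P₁ ⟶ Z), kernel.ι r₁ ≫ r₁ ≫ x = 0 := by
    intro Z x; rw [← Category.assoc, kernel.condition, zero_comp]
  have hq₂z : ∀ {Z : C} (x : P₂ ⟶ Z), kernel.ι r₂ ≫ r₂ ≫ x = 0 := by
    intro Z x; rw [← Category.assoc, kernel.condition, zero_comp]
  -- full invariance of the kernels of r₁, r₂
  have hinv₁ : ∀ h : N ⟶ N, ∃ α : kernel r₁ ⟶ kernel r₁,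
      kernel.ι r₁ ≫ h = α ≫ kernel.ι r₁ := by
    intro h
    obtain ⟨β, hβ⟩ := fc₁ h
    have h0 : (kernel.ι r₁ ≫ h) ≫ r₁ = 0 := by
      rw [Category.assoc, hβ, hq₁z]
    exact ⟨kernel.lift r₁ _ h0, (kernel.lift_ι _ _ _).symm⟩
  have hinv₂ : ∀ h : N ⟶ N, ∃ α : kernel r₂ ⟶ kernel r₂,
      kernel.ι r₂ ≫ h = α ≫ kernel.ι r₂ := by
    intro h
    obtain ⟨β, hβ⟩ := fc₂ h
    have h0 : (kernel.ι r₂ ≫ h) ≫ r₂ = 0 := by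
      rw [Category.assoc, hβ, hq₂z]
    exact ⟨kernel.lift r₂ _ h0, (kernel.lift_ι _ _ _).symm⟩
  -- the projections complementary to r₁, r₂
  have hpr₁c : (𝟙 N - r₁ ≫ s₁) ≫ r₁ = 0 := by
    rw [Preadditive.sub_comp, Category.id_comp, Category.assoc, hs₁, Category.comp_id, sub_self]
  have hpr₂c : (𝟙 N - r₂ ≫ s₂) ≫ r₂ = 0 := by
    rw [Preadditive.sub_comp, Category.id_comp, Category.assoc, hs₂, Category.comp_id, sub_self]
  set pr₁ : N ⟶ kernel r₁ := kernel.lift r₁ (𝟙 N - r₁ ≫ s₁) hpr₁c with hpr₁def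
  set pr₂ : N ⟶ kernel r₂ := kernel.lift r₂ (𝟙 N - r₂ ≫ s₂) hpr₂c with hpr₂def
  have hpr₁ : pr₁ ≫ kernel.ι r₁ = 𝟙 N - r₁ ≫ s₁ := kernel.lift_ι _ _ _
  have hpr₂ : pr₂ ≫ kernel.ι r₂ = 𝟙 N - r₂ ≫ s₂ := kernel.lift_ι _ _ _
  -- ker r₂ ⊆ im (r₁ ≫ s₁)
  have hgc : ((biprod.inr ≫ f) ≫ r₁ ≫ s₁) ≫ (𝟙 N - r₁ ≫ s₁) = 0 := by
    simp only [Preadditive.comp_sub, Category.comp_id, Category.assoc]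
    rw [hs₁re, sub_self]
  have hq₂c : kernel.ι r₂ ≫ cokernel.π ((biprod.inr ≫ f) ≫ r₁ ≫ s₁) = 0 := by
    rw [hc₂, hq₂z]
  have hkg : kernel.ι (cokernel.π ((biprod.inr ≫ f) ≫ r₁ ≫ s₁)) ≫ (𝟙 N - r₁ ≫ s₁) = 0 := by
    apply zero_of_epi_comp (Abelian.factorThruImage ((biprod.inr ≫ f) ≫ r₁ ≫ s₁))
    have hfacg : Abelian.factorThruImage ((biprod.inr ≫ f) ≫ r₁ ≫ s₁) ≫
        kernel.ι (cokernel.π ((biprod.inr ≫ f) ≫ r₁ ≫ s₁)) = (biprod.inr ≫ f) ≫ r₁ ≫ s₁ :=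
      Abelian.image.fac _
    rw [← Category.assoc, hfacg, hgc]
  have hq₂e₁ : kernel.ι r₂ ≫ (𝟙 N - r₁ ≫ s₁) = 0 := by
    have hlift : kernel.lift _ (kernel.ι r₂) hq₂c ≫
        kernel.ι (cokernel.π ((biprod.inr ≫ f) ≫ r₁ ≫ s₁)) = kernel.ι r₂ := kernel.lift_ι _ _ _
    rw [← hlift, Category.assoc, hkg, comp_zero]
  have hq₂e₁' : kernel.ι r₂ ≫ r₁ ≫ s₁ = kernel.ι r₂ := by
    rw [Preadditive.comp_sub, Category.comp_id, sub_eq_zero] at hq₂e₁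
    exact hq₂e₁.symm
  -- ker r₁ ⊆ im (r₂ ≫ s₂)
  obtain ⟨α, hα⟩ := hinv₁ (𝟙 N - r₂ ≫ s₂)
  have hstep : kernel.ι r₁ ≫ (𝟙 N - r₂ ≫ s₂) =
      (kernel.ι r₁ ≫ (𝟙 N - r₂ ≫ s₂)) ≫ (r₁ ≫ s₁) := by
    conv_lhs => rw [← hpr₂]
    conv_rhs => rw [← hpr₂]
    simp only [Category.assoc]
    rw [hq₂e₁']
  have hq₁e₂ : kernel.ι r₁ ≫ (𝟙 N - r₂ ≫ s₂) = 0 := by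
    rw [hstep, hα]
    simp only [Category.assoc]
    rw [hq₁z, comp_zero]
  have hq₁e₂' : kernel.ι r₁ ≫ r₂ ≫ s₂ = kernel.ι r₁ := by
    rw [Preadditive.comp_sub, Category.comp_id, sub_eq_zero] at hq₁e₂
    exact hq₁e₂.symm
  have hq₁e₂re := reassoc_of% hq₁e₂'
  -- idempotent algebra
  have hee₁ : r₁ ≫ s₁ ≫ r₁ ≫ s₁ = r₁ ≫ s₁ := by rw [hs₁re]
  have hεε₁ : (𝟙 N - r₁ ≫ s₁) ≫ (𝟙 N - r₂ ≫ s₂) = 0 := by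
    rw [← hpr₁, Category.assoc, hq₁e₂, comp_zero]
  have hεε₂ : (𝟙 N - r₂ ≫ s₂) ≫ (𝟙 N - r₁ ≫ s₁) = 0 := by
    rw [← hpr₂, Category.assoc, hq₂e₁, comp_zero]
  have hc₂₁ : r₂ ≫ s₂ ≫ r₁ ≫ s₁ = r₁ ≫ s₁ + r₂ ≫ s₂ - 𝟙 N := by
    have hexp : (𝟙 N - r₂ ≫ s₂) ≫ (𝟙 N - r₁ ≫ s₁) =
        𝟙 N - r₁ ≫ s₁ - r₂ ≫ s₂ + r₂ ≫ s₂ ≫ r₁ ≫ s₁ := by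
      simp only [Preadditive.sub_comp, Preadditive.comp_sub, Category.id_comp,
        Category.comp_id, Category.assoc]
      abel
    rw [hexp] at hεε₂
    calc r₂ ≫ s₂ ≫ r₁ ≫ s₁
        = (𝟙 N - r₁ ≫ s₁ - r₂ ≫ s₂ + r₂ ≫ s₂ ≫ r₁ ≫ s₁) + (r₁ ≫ s₁ + r₂ ≫ s₂ - 𝟙 N) := by
          abel
      _ = r₁ ≫ s₁ + r₂ ≫ s₂ - 𝟙 N := by rw [hεε₂, zero_add]
  have hc₁₂ : r₁ ≫ s₁ ≫ r₂ ≫ s₂ = r₁ ≫ s₁ + r₂ ≫ s₂ - 𝟙 N := by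
    have hexp : (𝟙 N - r₁ ≫ s₁) ≫ (𝟙 N - r₂ ≫ s₂) =
        𝟙 N - r₂ ≫ s₂ - r₁ ≫ s₁ + r₁ ≫ s₁ ≫ r₂ ≫ s₂ := by
      simp only [Preadditive.sub_comp, Preadditive.comp_sub, Category.id_comp,
        Category.comp_id, Category.assoc]
      abel
    rw [hexp] at hεε₁
    calc r₁ ≫ s₁ ≫ r₂ ≫ s₂
        = (𝟙 N - r₂ ≫ s₂ - r₁ ≫ s₁ + r₁ ≫ s₁ ≫ r₂ ≫ s₂) + (r₁ ≫ s₁ + r₂ ≫ s₂ - 𝟙 N) := by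
          abel
      _ = r₁ ≫ s₁ + r₂ ≫ s₂ - 𝟙 N := by rw [hεε₁, zero_add]
  have hc₁₂re := reassoc_of% hc₁₂
  set p : N ⟶ N := r₂ ≫ s₂ ≫ r₁ ≫ s₁ with hp
  -- now hc₂₁ : p = r₁ ≫ s₁ + r₂ ≫ s₂ - 𝟙 N
  have he₂p : r₂ ≫ s₂ ≫ p = p := by rw [hp, hs₂re]
  have he₁p : r₁ ≫ s₁ ≫ p = p := by
    rw [hp, hc₁₂re]
    simp only [Preadditive.add_comp, Preadditive.sub_comp, Category.id_comp, Category.assoc]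
    rw [hee₁]
    abel
  have hpp : p ≫ p = p := by
    conv_lhs => rw [hp]
    simp only [Category.assoc]
    rw [he₁p, he₂p]
  have hp0 : p ≫ (𝟙 N - p) = 0 := by
    rw [Preadditive.comp_sub, Category.comp_id, hpp, sub_self]
  have hq₁p : kernel.ι r₁ ≫ p = 0 := by rw [hp, hq₁e₂re, hq₁z]
  have hq₂p : kernel.ι r₂ ≫ p = 0 := by rw [hp, hq₂z]
  -- splitting of the idempotent p
  set ι : kernel (𝟙 N - p) ⟶ N := kernel.ι (𝟙 N - p) with hιdef
  set ρ : N ⟶ kernel (𝟙 N - p) := kernel.lift (𝟙 N - p) p hp0 with hρdef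
  haveI hmι : Mono ι := by rw [hιdef]; infer_instance
  have hρι : ρ ≫ ι = p := by rw [hρdef, hιdef]; exact kernel.lift_ι _ _ _
  have hιp : ι ≫ p = ι := by
    have h0 : ι ≫ (𝟙 N - p) = 0 := by rw [hιdef]; exact kernel.condition _
    rw [Preadditive.comp_sub, Category.comp_id, sub_eq_zero] at h0
    exact h0.symm
  have hιρ : ι ≫ ρ = 𝟙 (kernel (𝟙 N - p)) := by
    rw [← cancel_mono ι, Category.assoc, hρι, hιp, Category.id_comp]
  haveI hρepi : Epi ρ := by
    haveI : Epi (ι ≫ ρ) := by rw [hιρ]; infer_instance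
    exact epi_of_epi ι ρ
  have hq₁ρ : kernel.ι r₁ ≫ ρ = 0 := by
    rw [← cancel_mono ι, Category.assoc, hρι, hq₁p, zero_comp]
  have hq₂ρ : kernel.ι r₂ ≫ ρ = 0 := by
    rw [← cancel_mono ι, Category.assoc, hρι, hq₂p, zero_comp]
  have he₁ρ : r₁ ≫ s₁ ≫ ρ = ρ := by
    rw [← cancel_mono ι]
    simp only [Category.assoc]
    rw [hρι]
    exact he₁p
  have he₂ρ : r₂ ≫ s₂ ≫ ρ = ρ := by
    rw [← cancel_mono ι]
    simp only [Category.assoc]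
    rw [hρι]
    exact he₂p
  -- the cokernel projection of f kills ker r₁ and ker r₂
  have hq₁πf : kernel.ι r₁ ≫ cokernel.π f = 0 := by
    have h1 : kernel.ι r₁ ≫ cokernel.π (biprod.inl ≫ f) = 0 := by
      rw [hc₁, hq₁z]
    have h2 : kernel.ι (cokernel.π (biprod.inl ≫ f)) ≫ cokernel.π f = 0 := by
      apply zero_of_epi_comp (Abelian.factorThruImage (biprod.inl ≫ f))
      have hfac1 : Abelian.factorThruImage (biprod.inl ≫ f) ≫
          kernel.ι (cokernel.π (biprod.inl ≫ f)) = biprod.inl ≫ f := Abelian.image.fac _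
      rw [← Category.assoc, hfac1, Category.assoc, cokernel.condition, comp_zero]
    have hlift : kernel.lift _ (kernel.ι r₁) h1 ≫
        kernel.ι (cokernel.π (biprod.inl ≫ f)) = kernel.ι r₁ := kernel.lift_ι _ _ _
    rw [← hlift, Category.assoc, h2, comp_zero]
  have he₁πf : r₁ ≫ s₁ ≫ cokernel.π f = cokernel.π f := by
    have hε : (𝟙 N - r₁ ≫ s₁) ≫ cokernel.π f = 0 := by
      rw [← hpr₁, Category.assoc, hq₁πf, comp_zero]
    simp only [Preadditive.sub_comp, Category.id_comp, Category.assoc] at hε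
    rw [sub_eq_zero] at hε
    exact hε.symm
  have hgπf : ((biprod.inr ≫ f) ≫ r₁ ≫ s₁) ≫ cokernel.π f = 0 := by
    simp only [Category.assoc]
    rw [he₁πf, cokernel.condition, comp_zero]
  have hq₂πf : kernel.ι r₂ ≫ cokernel.π f = 0 := by
    have h2 : kernel.ι (cokernel.π ((biprod.inr ≫ f) ≫ r₁ ≫ s₁)) ≫ cokernel.π f = 0 := by
      apply zero_of_epi_comp (Abelian.factorThruImage ((biprod.inr ≫ f) ≫ r₁ ≫ s₁))
      have hfacg : Abelian.factorThruImage ((biprod.inr ≫ f) ≫ r₁ ≫ s₁) ≫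
          kernel.ι (cokernel.π ((biprod.inr ≫ f) ≫ r₁ ≫ s₁)) = (biprod.inr ≫ f) ≫ r₁ ≫ s₁ :=
        Abelian.image.fac _
      rw [← Category.assoc, hfacg, hgπf]
    have hlift : kernel.lift _ (kernel.ι r₂) hq₂c ≫
        kernel.ι (cokernel.π ((biprod.inr ≫ f) ≫ r₁ ≫ s₁)) = kernel.ι r₂ := kernel.lift_ι _ _ _
    rw [← hlift, Category.assoc, h2, comp_zero]
  have he₂πf : r₂ ≫ s₂ ≫ cokernel.π f = cokernel.π f := by
    have hε : (𝟙 N - r₂ ≫ s₂) ≫ cokernel.π f = 0 := by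
      rw [← hpr₂, Category.assoc, hq₂πf, comp_zero]
    simp only [Preadditive.sub_comp, Category.id_comp, Category.assoc] at hε
    rw [sub_eq_zero] at hε
    exact hε.symm
  have hpπf : p ≫ cokernel.π f = cokernel.π f := by
    rw [hp]
    simp only [Category.assoc]
    rw [he₁πf, he₂πf]
  -- the morphism t
  set t : kernel (𝟙 N - p) ⟶ cokernel f := ι ≫ cokernel.π f with htdef
  have hρt : ρ ≫ t = cokernel.π f := by
    rw [htdef, ← Category.assoc, hρι, hpπf]
  haveI htepi : Epi t := by
    haveI : Epi (ρ ≫ t) := by rw [hρt]; infer_instance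
    exact epi_of_epi ρ t
  -- full coinvariance of ρ
  have hfc : FullyCoinvariant ρ := by
    intro h
    refine ⟨ι ≫ h ≫ ρ, ?_⟩
    obtain ⟨α₁, hα₁⟩ := hinv₁ h
    obtain ⟨α₂, hα₂⟩ := hinv₂ h
    have e1 : kernel.ι r₁ ≫ h ≫ ρ = 0 := by
      rw [← Category.assoc, hα₁, Category.assoc, hq₁ρ, comp_zero]
    have e2 : kernel.ι r₂ ≫ h ≫ ρ = 0 := by
      rw [← Category.assoc, hα₂, Category.assoc, hq₂ρ, comp_zero]
    have hsplit : 𝟙 N - p = pr₁ ≫ kernel.ι r₁ + pr₂ ≫ kernel.ι r₂ := by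
      rw [hpr₁, hpr₂, hc₂₁]
      abel
    have h1 : (𝟙 N - p) ≫ (h ≫ ρ) = 0 := by
      have hcg : (𝟙 N - p) ≫ (h ≫ ρ)
          = (pr₁ ≫ kernel.ι r₁ + pr₂ ≫ kernel.ι r₂) ≫ (h ≫ ρ) :=
        congrArg (· ≫ (h ≫ ρ)) hsplit
      rw [hcg]
      simp only [Preadditive.add_comp, Category.assoc]
      rw [e1, e2]
      simp
    have h2 : h ≫ ρ = p ≫ (h ≫ ρ) := by
      rw [Preadditive.sub_comp, Category.id_comp, sub_eq_zero] at h1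
      exact h1
    calc h ≫ ρ = p ≫ (h ≫ ρ) := h2
      _ = ρ ≫ ι ≫ h ≫ ρ := by
        have hcg : (ρ ≫ ι) ≫ (h ≫ ρ) = p ≫ (h ≫ ρ) := congrArg (· ≫ (h ≫ ρ)) hρι
        rw [← hcg]
        simp only [Category.assoc]
  -- smallness of the image of f ≫ ρ
  have hsmall₁ : Stmt15Aux.Small (kernel.ι t₁) := Stmt15Aux.small_of_superfluousEpi st₁
  have hsmall₂ : Stmt15Aux.Small (kernel.ι t₂) := Stmt15Aux.small_of_superfluousEpi st₂
  haveI hα₁epi : Epi (s₁ ≫ ρ) := epi_of_epi_fac he₁ρ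
  haveI hα₂epi : Epi (s₂ ≫ ρ) := epi_of_epi_fac he₂ρ
  have hw₁c : ((biprod.inl ≫ f) ≫ r₁) ≫ t₁ = 0 := by
    rw [Category.assoc, ← hc₁, cokernel.condition]
  set w₁ := kernel.lift t₁ ((biprod.inl ≫ f) ≫ r₁) hw₁c with hw₁def
  have hw₁ : w₁ ≫ kernel.ι t₁ = (biprod.inl ≫ f) ≫ r₁ := kernel.lift_ι _ _ _
  have hfac₁ : (biprod.inl ≫ f) ≫ ρ = w₁ ≫ (kernel.ι t₁ ≫ (s₁ ≫ ρ)) := by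
    have hx : w₁ ≫ (kernel.ι t₁ ≫ (s₁ ≫ ρ)) = (biprod.inl ≫ f) ≫ ρ := by
      rw [← Category.assoc, hw₁]
      simp only [Category.assoc]
      rw [he₁ρ]
    exact hx.symm
  have hsmallf₁ : Stmt15Aux.Small ((biprod.inl ≫ f) ≫ ρ) :=
    Stmt15Aux.small_of_factor w₁ hfac₁ (Stmt15Aux.small_comp_epi hsmall₁ (s₁ ≫ ρ))
  have hw₂c : (((biprod.inr ≫ f) ≫ r₁ ≫ s₁) ≫ r₂) ≫ t₂ = 0 := by
    rw [Category.assoc ((biprod.inr ≫ f) ≫ r₁ ≫ s₁) r₂ t₂, ← hc₂, cokernel.condition]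
  set w₂ := kernel.lift t₂ (((biprod.inr ≫ f) ≫ r₁ ≫ s₁) ≫ r₂) hw₂c with hw₂def
  have hw₂ : w₂ ≫ kernel.ι t₂ = ((biprod.inr ≫ f) ≫ r₁ ≫ s₁) ≫ r₂ := kernel.lift_ι _ _ _
  have hfac₂ : (biprod.inr ≫ f) ≫ ρ = w₂ ≫ (kernel.ι t₂ ≫ (s₂ ≫ ρ)) := by
    have hx : w₂ ≫ (kernel.ι t₂ ≫ (s₂ ≫ ρ)) = (biprod.inr ≫ f) ≫ ρ := by
      rw [← Category.assoc, hw₂]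
      simp only [Category.assoc]
      rw [he₂ρ, he₁ρ]
    exact hx.symm
  have hsmallf₂ : Stmt15Aux.Small ((biprod.inr ≫ f) ≫ ρ) :=
    Stmt15Aux.small_of_factor w₂ hfac₂ (Stmt15Aux.small_comp_epi hsmall₂ (s₂ ≫ ρ))
  have hvdesc : f ≫ ρ = biprod.desc ((biprod.inl ≫ f) ≫ ρ) ((biprod.inr ≫ f) ≫ ρ) := by
    apply biprod.hom_ext' <;> simp
  have hsmallv : Stmt15Aux.Small (f ≫ ρ) := by
    rw [hvdesc]
    exact Stmt15Aux.small_desc hsmallf₁ hsmallf₂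
  -- superfluity of t
  have hwdef0 : f ≫ (ρ ≫ cokernel.π (f ≫ ρ)) = 0 := by
    rw [← Category.assoc]; exact cokernel.condition _
  set wm := cokernel.desc f (ρ ≫ cokernel.π (f ≫ ρ)) hwdef0 with hwmdef
  have hwfac : cokernel.π f ≫ wm = ρ ≫ cokernel.π (f ≫ ρ) := cokernel.π_desc _ _ _
  have htw : t ≫ wm = cokernel.π (f ≫ ρ) := by
    rw [← cancel_epi ρ, ← Category.assoc, hρt, hwfac]
  haveI hwepi : Epi wm := by
    haveI : Epi (t ≫ wm) := by rw [htw]; infer_instance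
    exact epi_of_epi t wm
  have hsup : ∀ ⦃X : C⦄ (h : X ⟶ kernel (𝟙 N - p)), Epi (h ≫ t) → Epi h := by
    intro X h hh
    haveI := hh
    have hE : Epi (h ≫ cokernel.π (f ≫ ρ)) := by
      rw [← htw, ← Category.assoc]
      exact epi_comp _ _
    exact hsmallv h hE
  exact ⟨kernel (𝟙 N - p), ρ, t, ⟨ι, hιρ⟩, hfc, ⟨htepi, hsup⟩, hρt.symm⟩
end

section
/- Let M and N₁, …, Nₙ be objects of an abelian category 𝒜. Then the finite biproduct ⊕ᵢ₌₁ⁿ Nᵢ is strongly M-CS-Rickart if and only if Nᵢ is strongly M-CS-Rickart for every i ∈ {1, …, n}. -/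
open CategoryTheory CategoryTheory.Limits

universe w v u

variable {C : Type u} [Category.{v} C] [Abelian C]

attribute [local instance] CategoryTheory.Abelian.hasFiniteBiproducts

section AuxStmt16

lemma essMono_comp' {K L L' : C} {e : K ⟶ L} {e' : L ⟶ L'}
    (he : EssentialMono e) (he' : EssentialMono e') : EssentialMono (e ≫ e') := by
  haveI := he.1; haveI := he'.1
  refine ⟨inferInstance, fun P h hm => ?_⟩
  rw [Category.assoc] at hm
  exact he'.2 h (he.2 _ hm)

lemma essMono_of_factor' {K K' L : C} {e : K ⟶ L} {e' : K' ⟶ L} {v : K ⟶ K'}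
    (he : EssentialMono e) (hv : Mono v) (hfac : v ≫ e' = e) (hm : Mono e') :
    EssentialMono e' := by
  refine ⟨hm, fun P h hmono => ?_⟩
  apply he.2 h
  rw [← hfac, Category.assoc]
  haveI := hv; haveI := hmono
  exact mono_comp _ _

lemma essMono_isZero' {K L : C} {e : K ⟶ L} (he : EssentialMono e)
    {X : C} (u : X ⟶ L) [Mono u] (h0 : IsZero (pullback u e)) : IsZero X := by
  haveI := he.1
  have hmono : Mono (e ≫ cokernel.π u) := by
    apply Preadditive.mono_of_cancel_zero
    intro T k hk
    rw [← Category.assoc] at hk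
    have hw : Abelian.monoLift u (k ≫ e) hk ≫ u = k ≫ e := Abelian.monoLift_comp u (k ≫ e) hk
    have hτ : pullback.lift (Abelian.monoLift u (k ≫ e) hk) k hw = 0 :=
      h0.eq_of_tgt _ 0
    calc k = pullback.lift (Abelian.monoLift u (k ≫ e) hk) k hw ≫ pullback.snd u e :=
          (pullback.lift_snd _ _ _).symm
      _ = 0 := by rw [hτ, zero_comp]
  have hπ : Mono (cokernel.π u) := he.2 _ hmono
  have hu0 : u = 0 := by
    haveI := hπ
    rw [← cancel_mono (cokernel.π u), cokernel.condition, zero_comp]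
  rw [IsZero.iff_id_eq_zero, ← cancel_mono u, Category.id_comp, zero_comp, hu0]

lemma essMono_of_pullback' {K L : C} {e : K ⟶ L} [Mono e]
    (H : ∀ (X : C) (u : X ⟶ L), Mono u → IsZero (pullback u e) → IsZero X) :
    EssentialMono e := by
  refine ⟨inferInstance, fun P h hm => ?_⟩
  have hsnd : pullback.snd (kernel.ι h) e = 0 := by
    haveI := hm
    rw [← cancel_mono (e ≫ h), zero_comp, ← Category.assoc, ← pullback.condition,
      Category.assoc, kernel.condition, comp_zero]
  have hfst : pullback.fst (kernel.ι h) e = 0 := by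
    rw [← cancel_mono (kernel.ι h), pullback.condition, hsnd, zero_comp, zero_comp]
  have h0 : IsZero (pullback (kernel.ι h) e) := by
    rw [IsZero.iff_id_eq_zero]
    apply pullback.hom_ext
    · rw [Category.id_comp, hfst, zero_comp]
    · rw [Category.id_comp, hsnd, zero_comp]
  have hker : IsZero (kernel h) := H _ (kernel.ι h) inferInstance h0
  apply Preadditive.mono_of_cancel_zero
  intro T k hk
  rw [← kernel.lift_ι h k hk, hker.eq_of_src (kernel.ι h) 0, comp_zero]

lemma essMono_pullback' {K L L' : C} {e : K ⟶ L} (he : EssentialMono e) (t : L' ⟶ L) [Mono t] :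
    EssentialMono (pullback.snd e t) := by
  haveI := he.1
  apply essMono_of_pullback'
  intro X u hu h0
  haveI := hu
  haveI : Mono (u ≫ t) := mono_comp _ _
  refine essMono_isZero' he (u ≫ t) ?_
  have cond : pullback.fst (u ≫ t) e ≫ u ≫ t = pullback.snd (u ≫ t) e ≫ e :=
    pullback.condition
  have hl : pullback.snd (u ≫ t) e ≫ e = (pullback.fst (u ≫ t) e ≫ u) ≫ t := by
    rw [Category.assoc, ← cond]
  set l : pullback (u ≫ t) e ⟶ pullback e t := pullback.lift _ _ hl with hldef
  have hle : l ≫ pullback.snd e t = pullback.fst (u ≫ t) e ≫ u := pullback.lift_snd _ _ _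
  set τ : pullback (u ≫ t) e ⟶ pullback u (pullback.snd e t) :=
    pullback.lift (pullback.fst (u ≫ t) e) l hle.symm with hτdef
  have hτ0 : τ = 0 := h0.eq_of_tgt _ 0
  have hx : pullback.fst (u ≫ t) e = 0 := by
    rw [← pullback.lift_fst (pullback.fst (u ≫ t) e) l hle.symm, ← hτdef, hτ0, zero_comp]
  have hk : pullback.snd (u ≫ t) e = 0 := by
    haveI := he.1
    rw [← cancel_mono e, ← cond, hx, zero_comp, zero_comp]
  rw [IsZero.iff_id_eq_zero]
  apply pullback.hom_ext
  · rw [Category.id_comp, hx, zero_comp]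
  · rw [Category.id_comp, hk, zero_comp]

/-- Transfer a strongly-CS-Rickart kernel decomposition along postcomposition with a mono. -/
lemma scs_transfer' {M A B : C} (f : M ⟶ A) (φ : A ⟶ B) [Mono φ]
    (h : ∃ (L : C) (e : kernel (f ≫ φ) ⟶ L) (s : L ⟶ M),
      EssentialMono e ∧ IsSection s ∧ FullyInvariant s ∧ kernel.ι (f ≫ φ) = e ≫ s) :
    ∃ (L : C) (e : kernel f ⟶ L) (s : L ⟶ M),
      EssentialMono e ∧ IsSection s ∧ FullyInvariant s ∧ kernel.ι f = e ≫ s := by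
  obtain ⟨L, e, s, he, hs, hfi, hk⟩ := h
  have hι : kernel.ι f ≫ f ≫ φ = 0 := by
    rw [← Category.assoc, kernel.condition, zero_comp]
  set w : kernel f ⟶ kernel (f ≫ φ) := kernel.lift (f ≫ φ) (kernel.ι f) hι with hwdef
  have hw : w ≫ kernel.ι (f ≫ φ) = kernel.ι f := kernel.lift_ι _ _ _
  have hι2 : kernel.ι (f ≫ φ) ≫ f = 0 := by
    rw [← cancel_mono φ, Category.assoc, kernel.condition, zero_comp]
  set v : kernel (f ≫ φ) ⟶ kernel f := kernel.lift f (kernel.ι (f ≫ φ)) hι2 with hvdef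
  have hv : v ≫ kernel.ι f = kernel.ι (f ≫ φ) := kernel.lift_ι _ _ _
  haveI hvm : Mono v := by
    haveI : Mono (v ≫ kernel.ι f) := by rw [hv]; infer_instance
    exact mono_of_mono v (kernel.ι f)
  haveI hwm : Mono w := by
    haveI : Mono (w ≫ kernel.ι (f ≫ φ)) := by rw [hw]; infer_instance
    exact mono_of_mono w (kernel.ι (f ≫ φ))
  have hvw : v ≫ w = 𝟙 _ := by
    rw [← cancel_mono (kernel.ι (f ≫ φ)), Category.assoc, hw, hv, Category.id_comp]
  haveI := he.1
  refine ⟨L, w ≫ e, s, ?_, hs, hfi, ?_⟩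
  · refine essMono_of_factor' he hvm ?_ (mono_comp _ _)
    rw [← Category.assoc, hvw, Category.id_comp]
  · rw [Category.assoc, ← hk, hw]

/-- The binary case of the biproduct theorem. -/
lemma scs_binary' {M A B : C} (hA : StronglyCSRickart M A) (hB : StronglyCSRickart M B) :
    StronglyCSRickart M (A ⊞ B) := by
  intro f
  obtain ⟨L₁, e₁, s₁, hE₁, ⟨p₁, hp₁⟩, hFI₁, hk₁⟩ := hA (f ≫ biprod.fst)
  haveI hs₁ : Mono s₁ := by
    haveI : Mono (s₁ ≫ p₁) := by rw [hp₁]; infer_instance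
    exact mono_of_mono s₁ p₁
  set g : M ⟶ B := p₁ ≫ s₁ ≫ f ≫ biprod.snd with hgdef
  obtain ⟨L₂, e₂, s₂, hE₂, ⟨p₂, hp₂⟩, hFI₂, hk₂⟩ := hB g
  haveI hs₂ : Mono s₂ := by
    haveI : Mono (s₂ ≫ p₂) := by rw [hp₂]; infer_instance
    exact mono_of_mono s₂ p₂
  haveI := hE₁.1; haveI := hE₂.1
  set s : pullback s₁ s₂ ⟶ M := pullback.fst s₁ s₂ ≫ s₁ with hsdef
  haveI hsm : Mono s := mono_comp _ _
  have hcondL : pullback.fst s₁ s₂ ≫ s₁ = pullback.snd s₁ s₂ ≫ s₂ := pullback.condition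
  -- the section property of s
  obtain ⟨α, hα⟩ := hFI₂ (p₁ ≫ s₁)
  have hpcomm : (p₂ ≫ s₂ ≫ p₁) ≫ s₁ = (p₂ ≫ α) ≫ s₂ := by
    simp only [Category.assoc]
    rw [hα]
  set p : M ⟶ pullback s₁ s₂ := pullback.lift (p₂ ≫ s₂ ≫ p₁) (p₂ ≫ α) hpcomm with hpdef
  have h1 : s ≫ p₂ = pullback.snd s₁ s₂ := by
    rw [hsdef, hcondL, Category.assoc, hp₂, Category.comp_id]
  have hsp : s ≫ p = 𝟙 (pullback s₁ s₂) := by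
    apply pullback.hom_ext
    · rw [Category.id_comp, Category.assoc, pullback.lift_fst, hsdef]
      simp only [Category.assoc]
      rw [pullback.condition_assoc, reassoc_of% hp₂, ← pullback.condition_assoc, hp₁,
        Category.comp_id]
    · rw [Category.id_comp, Category.assoc, pullback.lift_snd, ← cancel_mono s₂, hsdef]
      simp only [Category.assoc]
      rw [← hα, pullback.condition_assoc, reassoc_of% hp₂, ← pullback.condition_assoc,
        reassoc_of% hp₁, pullback.condition]
  -- full invariance of s
  have hFIs : FullyInvariant s := by
    intro h
    obtain ⟨α₁, hα₁⟩ := hFI₁ h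
    obtain ⟨α₂, hα₂⟩ := hFI₂ h
    have hcomm : (pullback.fst s₁ s₂ ≫ α₁) ≫ s₁ = (pullback.snd s₁ s₂ ≫ α₂) ≫ s₂ := by
      rw [Category.assoc, ← hα₁, Category.assoc, ← hα₂, ← Category.assoc, hcondL,
        Category.assoc]
    refine ⟨pullback.lift (pullback.fst s₁ s₂ ≫ α₁) (pullback.snd s₁ s₂ ≫ α₂) hcomm, ?_⟩
    rw [hsdef, ← Category.assoc, pullback.lift_fst]
    simp only [Category.assoc]
    rw [hα₁]
  -- the kernel maps
  have hι1 : kernel.ι f ≫ f ≫ biprod.fst = 0 := by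
    rw [← Category.assoc, kernel.condition, zero_comp]
  set k₁ : kernel f ⟶ kernel (f ≫ biprod.fst) := kernel.lift _ (kernel.ι f) hι1 with hk₁def
  have hk₁ι : k₁ ≫ kernel.ι (f ≫ biprod.fst) = kernel.ι f := kernel.lift_ι _ _ _
  have hιfac : kernel.ι f = k₁ ≫ e₁ ≫ s₁ := by rw [← hk₁ι, hk₁]
  have hιε : kernel.ι f ≫ p₁ ≫ s₁ = kernel.ι f := by
    conv_lhs => rw [hιfac]
    simp only [Category.assoc]
    rw [reassoc_of% hp₁, ← hιfac]
  have hιg : kernel.ι f ≫ g = 0 := by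
    rw [hgdef, reassoc_of% hιε, kernel.condition_assoc, zero_comp]
  set k₂ : kernel f ⟶ kernel g := kernel.lift g (kernel.ι f) hιg with hk₂def
  have hk₂ι : k₂ ≫ kernel.ι g = kernel.ι f := kernel.lift_ι _ _ _
  have hιfac₂ : kernel.ι f = k₂ ≫ e₂ ≫ s₂ := by rw [← hk₂ι, hk₂]
  have hecomm : (k₁ ≫ e₁) ≫ s₁ = (k₂ ≫ e₂) ≫ s₂ := by
    simp only [Category.assoc]
    rw [← hιfac, ← hιfac₂]
  set e : kernel f ⟶ pullback s₁ s₂ := pullback.lift (k₁ ≫ e₁) (k₂ ≫ e₂) hecomm with hedef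
  have hes : e ≫ s = kernel.ι f := by
    rw [hsdef, ← Category.assoc, hedef, pullback.lift_fst, Category.assoc, ← hιfac]
  haveI hem : Mono e := by
    haveI : Mono (e ≫ s) := by rw [hes]; infer_instance
    exact mono_of_mono e s
  -- essentiality of e
  haveI : Mono (pullback.snd s₁ s₂) := inferInstance
  have hq : EssentialMono (pullback.snd e₂ (pullback.snd s₁ s₂)) :=
    essMono_pullback' hE₂ (pullback.snd s₁ s₂)
  haveI := hq.1
  set q : pullback e₂ (pullback.snd s₁ s₂) ⟶ pullback s₁ s₂ :=
    pullback.snd e₂ (pullback.snd s₁ s₂) with hqdef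
  set j : pullback e₂ (pullback.snd s₁ s₂) ⟶ L₁ := q ≫ pullback.fst s₁ s₂ with hjdef
  haveI hjm : Mono j := mono_comp _ _
  have hq' : EssentialMono (pullback.snd e₁ j) := essMono_pullback' hE₁ j
  haveI := hq'.1
  set q' : pullback e₁ j ⟶ pullback e₂ (pullback.snd s₁ s₂) := pullback.snd e₁ j with hq'def
  have hE : EssentialMono (q' ≫ q) := essMono_comp' hq' hq
  set m : pullback e₁ j ⟶ M := (q' ≫ q) ≫ s with hmdef
  have hcondP : pullback.fst e₁ j ≫ e₁ = q' ≫ j := pullback.condition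
  have hcondP₂ : pullback.fst e₂ (pullback.snd s₁ s₂) ≫ e₂ = q ≫ pullback.snd s₁ s₂ :=
    pullback.condition
  have hm1 : m = pullback.fst e₁ j ≫ kernel.ι (f ≫ biprod.fst) := by
    rw [hmdef, hsdef]
    simp only [Category.assoc]
    rw [reassoc_of% hjdef.symm, ← reassoc_of% hcondP, ← hk₁]
  have hm2 : m = (q' ≫ pullback.fst e₂ (pullback.snd s₁ s₂)) ≫ kernel.ι g := by
    rw [hmdef, hsdef]
    simp only [Category.assoc]
    rw [(pullback.condition : pullback.fst s₁ s₂ ≫ s₁ = _), ← reassoc_of% hcondP₂, ← hk₂]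
  have hmε : m ≫ p₁ ≫ s₁ = m := by
    conv_lhs => rw [hm1, hk₁]
    simp only [Category.assoc]
    rw [reassoc_of% hp₁, ← hk₁, ← hm1]
  have hm0 : m ≫ f = 0 := by
    apply biprod.hom_ext
    · rw [zero_comp, Category.assoc, hm1]
      simp only [Category.assoc]
      rw [kernel.condition, comp_zero]
    · rw [zero_comp, Category.assoc, ← reassoc_of% hmε, ← hgdef, hm2]
      simp only [Category.assoc]
      rw [kernel.condition, comp_zero, comp_zero]
  set v : pullback e₁ j ⟶ kernel f := kernel.lift f m hm0 with hvdef
  have hvι : v ≫ kernel.ι f = m := kernel.lift_ι _ _ _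
  haveI hvm : Mono v := by
    haveI hmm : Mono m := by rw [hmdef]; exact mono_comp _ _
    haveI : Mono (v ≫ kernel.ι f) := by rw [hvι]; infer_instance
    exact mono_of_mono v (kernel.ι f)
  have hve : v ≫ e = q' ≫ q := by
    rw [← cancel_mono s, Category.assoc, hes, hvι, hmdef]
  exact ⟨pullback s₁ s₂, e, s, essMono_of_factor' hE hvm hve hem, ⟨p, hsp⟩, hFIs, hes.symm⟩

end AuxStmt16

theorem stmt16 (n : ℕ) (M : C) (N : Fin n → C) :
    StronglyCSRickart M (⨁ N) ↔ ∀ i, StronglyCSRickart M (N i) := by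
  constructor
  · intro h i f
    haveI : Mono (biproduct.ι N i) := inferInstance
    exact scs_transfer' f (biproduct.ι N i) (h (f ≫ biproduct.ι N i))
  · induction n with
    | zero =>
      intro _ f
      have hz : IsZero (⨁ N) := by
        rw [IsZero.iff_id_eq_zero, ← biproduct.total]
        simp
      have hf : f = 0 := hz.eq_of_tgt f 0
      have hl : kernel.lift f (𝟙 M) (by rw [hf, Category.id_comp]) ≫ kernel.ι f = 𝟙 M :=
        kernel.lift_ι _ _ _
      haveI hlm : Mono (kernel.lift f (𝟙 M) (by rw [hf, Category.id_comp])) := by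
        haveI : Mono (kernel.lift f (𝟙 M) (by rw [hf, Category.id_comp]) ≫ kernel.ι f) := by
          rw [hl]; infer_instance
        exact mono_of_mono _ (kernel.ι f)
      refine ⟨M, kernel.ι f, 𝟙 M, ⟨inferInstance, fun P h hm => ?_⟩,
        ⟨𝟙 M, Category.id_comp _⟩, fun h => ⟨h, by rw [Category.id_comp, Category.comp_id]⟩,
        (Category.comp_id _).symm⟩
      have hfac : h = kernel.lift f (𝟙 M) (by rw [hf, Category.id_comp]) ≫ (kernel.ι f ≫ h) := by
        rw [← Category.assoc, hl, Category.id_comp]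
      rw [hfac]
      haveI := hm
      exact mono_comp _ _
    | succ n ih =>
      intro h f
      set N' : Fin n → C := fun j => N j.succ with hN'
      set φ : ⨁ N ⟶ N 0 ⊞ ⨁ N' :=
        biprod.lift (biproduct.π N 0) (biproduct.lift fun j => biproduct.π N j.succ) with hφ
      set ψ : N 0 ⊞ ⨁ N' ⟶ ⨁ N :=
        biprod.desc (biproduct.ι N 0) (biproduct.desc fun j => biproduct.ι N j.succ) with hψ
      have hφψ : φ ≫ ψ = 𝟙 (⨁ N) := by
        rw [hφ, hψ, biprod.lift_desc, biproduct.lift_desc, ← biproduct.total]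
        rw [Fin.sum_univ_succ]
      haveI : Mono φ := by
        haveI : Mono (φ ≫ ψ) := by rw [hφψ]; infer_instance
        exact mono_of_mono φ ψ
      exact scs_transfer' f φ
        (scs_binary' (h 0) (ih N' fun j => h j.succ) (f ≫ φ))
end

section
/- Let M₁, …, Mₙ and N be objects of an abelian category 𝒜. Then N is dual strongly (⊕ᵢ₌₁ⁿ Mᵢ)-CS-Rickart (where ⊕ᵢ₌₁ⁿ Mᵢ is the finite biproduct) if and only if N is dual strongly Mᵢ-CS-Rickart for every i ∈ {1, …, n}. -/
open CategoryTheory CategoryTheory.Limits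

universe w v u

variable {C : Type u} [Category.{v} C] [Abelian C]

attribute [local instance] CategoryTheory.Abelian.hasFiniteBiproducts

section Aux17

/-- The decomposition data demanded by `DualStronglyCSRickart` for a single morphism. -/
def DSDecomp {M N : C} (f : M ⟶ N) : Prop :=
  ∃ (P : C) (r : N ⟶ P) (t : P ⟶ cokernel f),
    IsRetraction r ∧ FullyCoinvariant r ∧ SuperfluousEpi t ∧ cokernel.π f = r ≫ t

lemma dsdecomp_of_zero {M N : C} (f : M ⟶ N) (hf : f = 0) : DSDecomp f := by
  have hd0 : f ≫ 𝟙 N = 0 := by rw [hf, zero_comp]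
  let d : cokernel f ⟶ N := cokernel.desc f (𝟙 N) hd0
  have hπd : cokernel.π f ≫ d = 𝟙 N := cokernel.π_desc f (𝟙 N) hd0
  have hdπ : d ≫ cokernel.π f = 𝟙 (cokernel f) := by
    rw [← cancel_epi (cokernel.π f), ← Category.assoc, hπd, Category.id_comp,
      Category.comp_id]
  refine ⟨cokernel f, cokernel.π f, 𝟙 _, ⟨d, hdπ⟩, ?_, ?_, (Category.comp_id _).symm⟩
  · intro h
    refine ⟨d ≫ h ≫ cokernel.π f, ?_⟩
    rw [← Category.assoc, ← Category.assoc, hπd, Category.id_comp]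
  · refine ⟨inferInstance, fun X h hh => ?_⟩
    simpa using hh

/-- The key gluing lemma: if `f` generates the same quotients of `N` as the pair
`(f₁, f₂)` and decompositions exist for `f₁` and `f₂`, then one exists for `f`. -/
lemma dsdecomp_glue {M₁ M₂ M' N : C} (f₁ : M₁ ⟶ N) (f₂ : M₂ ⟶ N) (f : M' ⟶ N)
    (hiff : ∀ ⦃Z : C⦄ (c : N ⟶ Z), f ≫ c = 0 ↔ f₁ ≫ c = 0 ∧ f₂ ≫ c = 0)
    (h1 : DSDecomp f₁) (h2 : DSDecomp f₂) : DSDecomp f := by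
  obtain ⟨P₁, r₁, t₁, ⟨s₁, hs₁⟩, hfc₁, ⟨ht₁e, ht₁s⟩, hπ₁⟩ := h1
  obtain ⟨P₂, r₂, t₂, ⟨s₂, hs₂⟩, hfc₂, ⟨ht₂e, ht₂s⟩, hπ₂⟩ := h2
  set e₁ : N ⟶ N := r₁ ≫ s₁ with he₁def
  set e₂ : N ⟶ N := r₂ ≫ s₂ with he₂def
  have star₁ : ∀ h : N ⟶ N, h ≫ e₁ = e₁ ≫ h ≫ e₁ := by
    intro h
    obtain ⟨β, hβ⟩ := hfc₁ h
    rw [he₁def]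
    simp only [Category.assoc]
    rw [reassoc_of% hβ, reassoc_of% hs₁]
  have star₂ : ∀ h : N ⟶ N, h ≫ e₂ = e₂ ≫ h ≫ e₂ := by
    intro h
    obtain ⟨β, hβ⟩ := hfc₂ h
    rw [he₂def]
    simp only [Category.assoc]
    rw [reassoc_of% hβ, reassoc_of% hs₂]
  have he₁e₁ : e₁ ≫ e₁ = e₁ := by
    rw [he₁def]; simp only [Category.assoc]; rw [reassoc_of% hs₁]
  have he₂e₂ : e₂ ≫ e₂ = e₂ := by
    rw [he₂def]; simp only [Category.assoc]; rw [reassoc_of% hs₂]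
  set E : N ⟶ N := e₁ ≫ e₂ with hEdef
  have hEE : E ≫ E = E := by
    rw [hEdef]
    have h12 : e₁ ≫ e₂ = e₂ ≫ e₁ ≫ e₂ := star₂ e₁
    calc (e₁ ≫ e₂) ≫ e₁ ≫ e₂ = e₁ ≫ (e₂ ≫ e₁ ≫ e₂) := by simp only [Category.assoc]
      _ = e₁ ≫ e₁ ≫ e₂ := by rw [← h12]
      _ = (e₁ ≫ e₁) ≫ e₂ := by simp only [Category.assoc]
      _ = e₁ ≫ e₂ := by rw [he₁e₁]
  have starE : ∀ h : N ⟶ N, h ≫ E = E ≫ h ≫ E := by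
    intro h
    calc h ≫ E = (h ≫ e₁) ≫ e₂ := by rw [hEdef]; simp only [Category.assoc]
      _ = (e₁ ≫ h ≫ e₁) ≫ e₂ := by rw [← star₁]
      _ = e₁ ≫ ((h ≫ e₁) ≫ e₂) := by simp only [Category.assoc]
      _ = e₁ ≫ (e₂ ≫ (h ≫ e₁) ≫ e₂) := by rw [← star₂ (h ≫ e₁)]
      _ = E ≫ h ≫ E := by rw [hEdef]; simp only [Category.assoc]
  -- split the idempotent E
  have hE0 : E ≫ (𝟙 N - E) = 0 := by
    rw [Preadditive.comp_sub, Category.comp_id, hEE, sub_self]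
  set P : C := kernel (𝟙 N - E) with hPdef
  set s : P ⟶ N := kernel.ι (𝟙 N - E) with hsdef
  set r : N ⟶ P := kernel.lift (𝟙 N - E) E hE0 with hrdef
  have hrs : r ≫ s = E := kernel.lift_ι _ _ _
  have hsE : s ≫ E = s := by
    have := kernel.condition (𝟙 N - E)
    rw [Preadditive.comp_sub, Category.comp_id, sub_eq_zero] at this
    exact this.symm
  have hsr : s ≫ r = 𝟙 P := by
    rw [← cancel_mono s, Category.assoc, hrs, hsE, Category.id_comp]
  -- the factorizations of cokernel.π f through cokernel f₁ and cokernel f₂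
  have hf₁π : f₁ ≫ cokernel.π f = 0 := ((hiff _).mp (cokernel.condition f)).1
  have hf₂π : f₂ ≫ cokernel.π f = 0 := ((hiff _).mp (cokernel.condition f)).2
  set u₁ : cokernel f₁ ⟶ cokernel f := cokernel.desc f₁ (cokernel.π f) hf₁π with hu₁def
  set u₂ : cokernel f₂ ⟶ cokernel f := cokernel.desc f₂ (cokernel.π f) hf₂π with hu₂def
  have hπu₁ : cokernel.π f₁ ≫ u₁ = cokernel.π f := cokernel.π_desc _ _ _
  have hπu₂ : cokernel.π f₂ ≫ u₂ = cokernel.π f := cokernel.π_desc _ _ _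
  have he₁π : e₁ ≫ cokernel.π f = cokernel.π f := by
    rw [← hπu₁, hπ₁, he₁def]
    simp only [Category.assoc]
    rw [reassoc_of% hs₁]
  have he₂π : e₂ ≫ cokernel.π f = cokernel.π f := by
    rw [← hπu₂, hπ₂, he₂def]
    simp only [Category.assoc]
    rw [reassoc_of% hs₂]
  have hEπ : E ≫ cokernel.π f = cokernel.π f := by
    rw [hEdef, Category.assoc, he₂π, he₁π]
  set t : P ⟶ cokernel f := s ≫ cokernel.π f with htdef
  have hrt : cokernel.π f = r ≫ t := by
    rw [htdef, ← Category.assoc, hrs, hEπ]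
  refine ⟨P, r, t, ⟨s, hsr⟩, ?_, ⟨?_, ?_⟩, hrt⟩
  · -- fully coinvariant
    intro h
    refine ⟨s ≫ h ≫ r, ?_⟩
    rw [← cancel_mono s]
    simp only [Category.assoc]
    rw [reassoc_of% hrs, hrs]
    exact starE h
  · -- t is epi
    have : Epi (r ≫ t) := by rw [← hrt]; infer_instance
    exact epi_of_epi r t
  · -- t is superfluous
    intro X h hh
    set g : X ⟶ N := h ≫ s with hgdef
    have hgπ : Epi (g ≫ cokernel.π f) := by
      rw [hgdef, Category.assoc, ← htdef]; exact hh
    -- Step A: [g ≫ r₁, f₂ ≫ r₁] composed with t₁ is epi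
    have wA : Epi (biprod.desc (g ≫ r₁) (f₂ ≫ r₁) ≫ t₁) := by
      apply Preadditive.epi_of_cancel_zero
      intro Z c hc
      have hc1 : g ≫ cokernel.π f₁ ≫ c = 0 := by
        have := biprod.inl ≫= hc
        simpa [hπ₁, Category.assoc] using this
      have hc2 : f₂ ≫ cokernel.π f₁ ≫ c = 0 := by
        have := biprod.inr ≫= hc
        simpa [hπ₁, Category.assoc] using this
      have hfc0 : f ≫ cokernel.π f₁ ≫ c = 0 := by
        refine (hiff _).mpr ⟨?_, hc2⟩
        rw [← Category.assoc, cokernel.condition, zero_comp]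
      set d : cokernel f ⟶ Z := cokernel.desc f (cokernel.π f₁ ≫ c) hfc0 with hddef
      have hπd : cokernel.π f ≫ d = cokernel.π f₁ ≫ c := cokernel.π_desc _ _ _
      have hd0 : d = 0 := by
        apply zero_of_epi_comp (g ≫ cokernel.π f)
        rw [Category.assoc, hπd, hc1]
      have : cokernel.π f₁ ≫ c = 0 := by rw [← hπd, hd0, comp_zero]
      exact zero_of_epi_comp (cokernel.π f₁) this
    have wepi : Epi (biprod.desc (g ≫ r₁) (f₂ ≫ r₁)) := ht₁s _ wA
    -- Step B: g, f₂ and (𝟙 - e₁) jointly generate N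
    have stepB : ∀ ⦃Z : C⦄ (c : N ⟶ Z), g ≫ c = 0 → f₂ ≫ c = 0 →
        (𝟙 N - e₁) ≫ c = 0 → c = 0 := by
      intro Z c hgc hf₂c he₁c
      have hce₁ : e₁ ≫ c = c := by
        rw [Preadditive.sub_comp, Category.id_comp, sub_eq_zero] at he₁c
        exact he₁c.symm
      have key₁ : r₁ ≫ s₁ ≫ c = c := by
        rw [← Category.assoc, ← he₁def, hce₁]
      have hs₁c : s₁ ≫ c = 0 := by
        apply zero_of_epi_comp (biprod.desc (g ≫ r₁) (f₂ ≫ r₁))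
        apply biprod.hom_ext'
        · simp only [biprod.inl_desc_assoc, Category.assoc, comp_zero]
          rw [key₁, hgc]
        · simp only [biprod.inr_desc_assoc, Category.assoc, comp_zero]
          rw [key₁, hf₂c]
      rw [← key₁, hs₁c, comp_zero]
    -- Step C: second application of superfluousness
    have he₁E : e₁ ≫ E = E := by rw [hEdef, ← Category.assoc, he₁e₁]
    have he₂E : e₂ ≫ E = E := by rw [hEdef]; exact (star₂ e₁).symm
    have wC : Epi (biprod.desc (g ≫ r₂) ((𝟙 N - E) ≫ r₂) ≫ t₂) := by
      apply Preadditive.epi_of_cancel_zero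
      intro Z c hc
      set c' : N ⟶ Z := cokernel.π f₂ ≫ c with hc'def
      have h1 : g ≫ c' = 0 := by
        have := biprod.inl ≫= hc
        simpa [hπ₂, hc'def, Category.assoc] using this
      have h2 : (𝟙 N - E) ≫ c' = 0 := by
        have := biprod.inr ≫= hc
        simpa [hπ₂, hc'def, Category.assoc] using this
      have hf₂c' : f₂ ≫ c' = 0 := by
        rw [hc'def, ← Category.assoc, cokernel.condition, zero_comp]
      have hEc' : E ≫ c' = c' := by
        rw [Preadditive.sub_comp, Category.id_comp, sub_eq_zero] at h2
        exact h2.symm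
      have h3 : (𝟙 N - e₁) ≫ c' = 0 := by
        rw [← hEc', ← Category.assoc, Preadditive.sub_comp, Category.id_comp, he₁E,
          sub_self, zero_comp]
      have hc'0 : c' = 0 := stepB c' h1 hf₂c' h3
      have : cokernel.π f₂ ≫ c = 0 := by rw [← hc'def, hc'0]
      exact zero_of_epi_comp (cokernel.π f₂) this
    have w₂epi : Epi (biprod.desc (g ≫ r₂) ((𝟙 N - E) ≫ r₂)) := ht₂s _ wC
    -- Step D: conclude that h is epi
    apply Preadditive.epi_of_cancel_zero
    intro Z c hc
    set c' : N ⟶ Z := r ≫ c with hc'def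
    have hgc' : g ≫ c' = 0 := by
      rw [hc'def, hgdef, Category.assoc, ← Category.assoc s r, hsr, Category.id_comp, hc]
    have hEr : E ≫ r = r := by
      rw [← cancel_mono s, Category.assoc, hrs, hEE]
    have hEc' : E ≫ c' = c' := by
      rw [hc'def, ← Category.assoc, hEr]
    have he₂c' : e₂ ≫ c' = c' := by
      rw [← hEc', ← Category.assoc, he₂E]
    have key₂ : r₂ ≫ s₂ ≫ c' = c' := by
      rw [← Category.assoc, ← he₂def, he₂c']
    have hws₂ : s₂ ≫ c' = 0 := by
      apply zero_of_epi_comp (biprod.desc (g ≫ r₂) ((𝟙 N - E) ≫ r₂))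
      apply biprod.hom_ext'
      · simp only [biprod.inl_desc_assoc, Category.assoc, comp_zero]
        rw [key₂, hgc']
      · simp only [biprod.inr_desc_assoc, Category.assoc, comp_zero]
        rw [key₂, Preadditive.sub_comp, Category.id_comp, hEc', sub_self]
    have hc'0 : c' = 0 := by rw [← key₂, hws₂, comp_zero]
    have : c = s ≫ c' := by
      rw [hc'def, ← Category.assoc, hsr, Category.id_comp]
    rw [this, hc'0, comp_zero]

lemma dscs_fwd {n : ℕ} {M : Fin n → C} {N : C} (H : DualStronglyCSRickart (⨁ M) N)
    (i : Fin n) : DualStronglyCSRickart (M i) N := by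
  intro f
  obtain ⟨P, r, t', ⟨s, hs⟩, hfc, ⟨hte, hts⟩, hπ⟩ := H (biproduct.π M i ≫ f)
  have hg0 : (biproduct.π M i ≫ f) ≫ cokernel.π f = 0 := by
    rw [Category.assoc, cokernel.condition, comp_zero]
  set φh : cokernel (biproduct.π M i ≫ f) ⟶ cokernel f :=
    cokernel.desc (biproduct.π M i ≫ f) (cokernel.π f) hg0 with hφhdef
  have hf0 : f ≫ cokernel.π (biproduct.π M i ≫ f) = 0 := by
    calc f ≫ cokernel.π (biproduct.π M i ≫ f)
        = biproduct.ι M i ≫ (biproduct.π M i ≫ f) ≫ cokernel.π (biproduct.π M i ≫ f) := by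
          rw [← Category.assoc, ← Category.assoc, biproduct.ι_π_self, Category.id_comp]
      _ = 0 := by rw [cokernel.condition, comp_zero]
  set φi : cokernel f ⟶ cokernel (biproduct.π M i ≫ f) :=
    cokernel.desc f (cokernel.π (biproduct.π M i ≫ f)) hf0 with hφidef
  have h₁ : φh ≫ φi = 𝟙 _ := coequalizer.hom_ext (by simp [hφhdef, hφidef])
  have h₂ : φi ≫ φh = 𝟙 _ := coequalizer.hom_ext (by simp [hφhdef, hφidef])
  have hφhe : Epi φh := by
    apply Preadditive.epi_of_cancel_zero
    intro Z c hc
    rw [← Category.id_comp c, ← h₂, Category.assoc, hc, comp_zero]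
  have hφie : Epi φi := by
    apply Preadditive.epi_of_cancel_zero
    intro Z c hc
    rw [← Category.id_comp c, ← h₁, Category.assoc, hc, comp_zero]
  refine ⟨P, r, t' ≫ φh, ⟨s, hs⟩, hfc, ⟨?_, ?_⟩, ?_⟩
  · haveI := hte; haveI := hφhe; exact epi_comp _ _
  · intro X h hh
    apply hts
    haveI := hh; haveI := hφie
    have hh' : Epi ((h ≫ t' ≫ φh) ≫ φi) := epi_comp _ _
    have heq : (h ≫ t' ≫ φh) ≫ φi = h ≫ t' := by
      simp only [Category.assoc]
      rw [h₁, Category.comp_id]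
    rwa [heq] at hh'
  · rw [← Category.assoc, ← hπ, hφhdef, cokernel.π_desc]

lemma dscs_back : ∀ (n : ℕ) (M : Fin n → C) (N : C),
    (∀ i, DualStronglyCSRickart (M i) N) → DualStronglyCSRickart (⨁ M) N := by
  intro n
  induction n with
  | zero =>
    intro M N _ f
    have hid : 𝟙 (⨁ M) = 0 := biproduct.hom_ext' _ _ (fun j => j.elim0)
    have hf : f = 0 := by rw [← Category.id_comp f, hid, zero_comp]
    exact dsdecomp_of_zero f hf
  | succ n ih =>
    intro M N H f
    set f₁ : M 0 ⟶ N := biproduct.ι M 0 ≫ f with hf₁def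
    set f₂ : (⨁ fun i : Fin n => M i.succ) ⟶ N :=
      biproduct.desc (fun i : Fin n => biproduct.ι M i.succ ≫ f) with hf₂def
    have hiff : ∀ ⦃Z : C⦄ (c : N ⟶ Z), f ≫ c = 0 ↔ f₁ ≫ c = 0 ∧ f₂ ≫ c = 0 := by
      intro Z c
      constructor
      · intro h
        constructor
        · rw [hf₁def, Category.assoc, h, comp_zero]
        · rw [hf₂def]
          apply biproduct.hom_ext'
          intro j
          simp only [biproduct.ι_desc_assoc, Category.assoc, comp_zero]
          rw [h, comp_zero]
      · rintro ⟨h₀, hsucc⟩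
        apply biproduct.hom_ext'
        intro j
        rw [comp_zero]
        induction j using Fin.cases with
        | zero =>
          rw [← Category.assoc, ← hf₁def, h₀]
        | succ i =>
          have := biproduct.ι (fun i : Fin n => M i.succ) i ≫= hsucc
          rw [comp_zero, hf₂def, ← Category.assoc, biproduct.ι_desc] at this
          rwa [← Category.assoc]
    exact dsdecomp_glue f₁ f₂ f hiff (H 0 f₁)
      (ih (fun i => M i.succ) N (fun i => H i.succ) f₂)

end Aux17

theorem stmt17 (n : ℕ) (M : Fin n → C) (N : C) :
    DualStronglyCSRickart (⨁ M) N ↔ ∀ i, DualStronglyCSRickart (M i) N :=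
  ⟨fun H i => dscs_fwd H i, fun H => dscs_back n M N H⟩
end

section
/- Let M be a strictly SSIP-extending object of an abelian category 𝒜, and let (Nᵢ)_{i∈I} be a family of objects of 𝒜 having a product ∏_{i∈I} Nᵢ in 𝒜. Then ∏_{i∈I} Nᵢ is strongly M-CS-Rickart if and only if Nᵢ is strongly M-CS-Rickart for every i ∈ I. -/
open CategoryTheory CategoryTheory.Limits

universe w v u

variable {C : Type u} [Category.{v} C] [Abelian C]

/-- Auxiliary: a subobject is `⊥` as soon as its arrow vanishes. -/
lemma aux_eq_bot_of_arrow_zero {M : C} {X : Subobject M} (h : X.arrow = 0) : X = ⊥ := by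
  rw [← Subobject.mk_arrow X]
  exact Subobject.mk_eq_bot_iff_zero.mpr h

/-- Bridge, one direction: a morphism-level essential decomposition of a kernel gives
lattice-level essentiality of the kernel subobject in the subobject generated by the section. -/
lemma aux_essentialIn {M P : C} (f : M ⟶ P) {L : C} (e : kernel f ⟶ L) (s : L ⟶ M)
    [Mono s] (he : EssentialMono e) (hfac : kernel.ι f = e ≫ s) :
    EssentialIn (kernelSubobject f) (Subobject.mk s) := by
  constructor
  · exact Subobject.le_mk_of_comm ((kernelSubobjectIso f).hom ≫ e)
      (by rw [Category.assoc, ← hfac, kernelSubobject_arrow])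
  · intro X hXU hbot
    set x : (X : C) ⟶ L := Subobject.ofLE X _ hXU ≫ (Subobject.underlyingIso s).hom with hx
    have hxs : x ≫ s = X.arrow := by
      rw [hx, Category.assoc, Subobject.underlyingIso_hom_comp_eq_mk, Subobject.ofLE_arrow]
    haveI : Mono x := mono_comp _ _
    have hkey : Mono (e ≫ cokernel.π x) := by
      apply Preadditive.mono_of_cancel_zero
      intro Z z hz
      have hz' : (z ≫ e) ≫ cokernel.π x = 0 := by rw [Category.assoc]; exact hz
      have hw : Abelian.monoLift x (z ≫ e) hz' ≫ x = z ≫ e := Abelian.monoLift_comp x _ hz'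
      have hX : X.Factors (z ≫ kernel.ι f) := by
        have heq : z ≫ kernel.ι f = Abelian.monoLift x (z ≫ e) hz' ≫ X.arrow := by
          rw [← hxs, ← Category.assoc, hw, hfac, Category.assoc]
        rw [heq]
        exact Subobject.factors_comp_arrow _
      have hK : (kernelSubobject f).Factors (z ≫ kernel.ι f) := by
        have heq : z ≫ kernel.ι f
            = (z ≫ (kernelSubobjectIso f).inv) ≫ (kernelSubobject f).arrow := by
          rw [Category.assoc, kernelSubobject_arrow']
        rw [heq]
        exact Subobject.factors_comp_arrow _
      have hzero : z ≫ kernel.ι f = 0 := by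
        have := (Subobject.inf_factors (z ≫ kernel.ι f)).mpr ⟨hX, hK⟩
        rw [hbot] at this
        exact (Subobject.bot_factors_iff_zero _).mp this
      exact zero_of_comp_mono (kernel.ι f) hzero
    haveI hmc : Mono (cokernel.π x) := he.2 (cokernel.π x) hkey
    have hx0 : x = 0 := zero_of_comp_mono (cokernel.π x) (cokernel.condition x)
    apply aux_eq_bot_of_arrow_zero
    rw [← hxs, hx0, zero_comp]

/-- Bridge, other direction: lattice-level essentiality of the kernel subobject in a
subobject `W` gives a morphism-level essential mono into `W`. -/
lemma aux_essMono {M P : C} (f : M ⟶ P) (W : Subobject M)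
    (hle : kernelSubobject f ≤ W) (hess : EssentialIn (kernelSubobject f) W) :
    EssentialMono ((kernelSubobjectIso f).inv ≫ Subobject.ofLE _ _ hle) := by
  constructor
  · exact mono_comp ((kernelSubobjectIso f).inv) (Subobject.ofLE _ _ hle)
  · intro Q h hm
    haveI h2 : Mono (Subobject.ofLE _ _ hle ≫ h) := by
      rw [Category.assoc] at hm
      haveI := hm
      have heq : Subobject.ofLE _ _ hle ≫ h = (kernelSubobjectIso f).hom ≫
          ((kernelSubobjectIso f).inv ≫ (Subobject.ofLE _ _ hle ≫ h)) := by simp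
      rw [heq]
      exact mono_comp _ _
    set X : Subobject M := Subobject.mk (kernel.ι h ≫ W.arrow) with hXdef
    have hXW : X ≤ W := Subobject.mk_le_of_comm (kernel.ι h) rfl
    have hinter : X ⊓ kernelSubobject f = ⊥ := by
      set b := Subobject.ofLE (X ⊓ kernelSubobject f) (kernelSubobject f) inf_le_right with hbdef
      set a := Subobject.ofLE (X ⊓ kernelSubobject f) X inf_le_left with hadef
      have ha : a ≫ X.arrow = (X ⊓ kernelSubobject f).arrow := Subobject.ofLE_arrow _
      have hb : b ≫ (kernelSubobject f).arrow = (X ⊓ kernelSubobject f).arrow :=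
        Subobject.ofLE_arrow _
      have hXarrow : (Subobject.underlyingIso _).hom ≫ (kernel.ι h ≫ W.arrow) = X.arrow :=
        Subobject.underlyingIso_hom_comp_eq_mk _
      have hKarrow : Subobject.ofLE _ _ hle ≫ W.arrow = (kernelSubobject f).arrow :=
        Subobject.ofLE_arrow _
      have heq : (b ≫ Subobject.ofLE _ _ hle) ≫ W.arrow =
          ((a ≫ (Subobject.underlyingIso _).hom) ≫ kernel.ι h) ≫ W.arrow := by
        simp only [Category.assoc]
        rw [hKarrow, hb, ← ha, ← hXarrow]
      have heq' : b ≫ Subobject.ofLE _ _ hle =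
          (a ≫ (Subobject.underlyingIso _).hom) ≫ kernel.ι h :=
        (cancel_mono W.arrow).mp heq
      have hb0 : b = 0 := by
        apply zero_of_comp_mono (Subobject.ofLE _ _ hle ≫ h)
        rw [← Category.assoc, heq', Category.assoc, kernel.condition, comp_zero]
      apply aux_eq_bot_of_arrow_zero
      rw [← hb, hb0, zero_comp]
    have hX0 : X = ⊥ := hess.2 X hXW hinter
    have hz : kernel.ι h ≫ W.arrow = 0 := Subobject.mk_eq_bot_iff_zero.mp hX0
    have hι : kernel.ι h = 0 := zero_of_comp_mono W.arrow hz
    exact Preadditive.mono_of_kernel_zero hι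

theorem stmt18 (M : C) (hM : StrictlySSIPExtending.{w} M)
    {I : Type w} (N : I → C) [HasProduct N] :
    StronglyCSRickart M (∏ᶜ N) ↔ ∀ i, StronglyCSRickart M (N i) := by
  constructor
  · -- product strongly CS-Rickart → each factor strongly CS-Rickart
    intro h i f
    classical
    set σ : N i ⟶ ∏ᶜ N :=
      Pi.lift (fun j => if hj : i = j then eqToHom (congrArg N hj) else 0) with hσdef
    have hσπ : σ ≫ Pi.π N i = 𝟙 (N i) := by simp [hσdef]
    haveI : Mono (σ ≫ Pi.π N i) := by rw [hσπ]; infer_instance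
    haveI : Mono σ := mono_of_mono σ (Pi.π N i)
    obtain ⟨L, e, s, he, hs, hfi, hk⟩ := h (f ≫ σ)
    haveI : Mono e := he.1
    refine ⟨L, (kernelCompMono f σ).inv ≫ e, s, ?_, hs, hfi, ?_⟩
    · constructor
      · exact mono_comp ((kernelCompMono f σ).inv) e
      · intro Q h' hm
        have hm2 : Mono (e ≫ h') := by
          rw [Category.assoc] at hm
          haveI := hm
          have heq : e ≫ h' = (kernelCompMono f σ).hom ≫
              ((kernelCompMono f σ).inv ≫ (e ≫ h')) := by
            rw [← Category.assoc, Iso.hom_inv_id, Category.id_comp]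
          rw [heq]
          exact mono_comp _ _
        exact he.2 h' hm2
    · have : (kernelCompMono f σ).inv ≫ kernel.ι (f ≫ σ) = kernel.ι f := by
        simp [kernelCompMono]
      rw [Category.assoc, ← hk, this]
  · -- each factor strongly CS-Rickart → product strongly CS-Rickart
    intro h f
    set A : I → Subobject M := fun i => kernelSubobject (f ≫ Pi.π N i) with hAdef
    have hglb : IsGLB (Set.range A) (kernelSubobject f) := by
      constructor
      · rintro _ ⟨i, rfl⟩
        exact kernelSubobject_comp_le f (Pi.π N i)
      · intro X hX
        apply le_kernelSubobject
        apply Limits.Pi.hom_ext (f := N)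
        intro j
        have hXj : X ≤ A j := hX ⟨j, rfl⟩
        have hz : X.arrow ≫ (f ≫ Pi.π N j) = 0 := by
          rw [← Subobject.ofLE_arrow hXj, Category.assoc, kernelSubobject_arrow_comp, comp_zero]
        rw [Category.assoc, zero_comp]
        exact hz
    have hfam : ∀ i, ∃ U, SubDirectSummand U ∧ EssentialIn (A i) U := by
      intro i
      obtain ⟨L, e, s, he, hs, _, hk⟩ := h i (f ≫ Pi.π N i)
      obtain ⟨p, hp⟩ := hs
      haveI : Mono s := by
        haveI : Mono (s ≫ p) := by rw [hp]; infer_instance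
        exact mono_of_mono s p
      refine ⟨Subobject.mk s, ?_, aux_essentialIn _ e s he hk⟩
      refine ⟨p ≫ (Subobject.underlyingIso s).inv, ?_⟩
      rw [← Subobject.underlyingIso_hom_comp_eq_mk s, Category.assoc, ← Category.assoc s p,
        hp, Category.id_comp, Iso.hom_inv_id]
    obtain ⟨W, hWds, hWfi, hWess⟩ := hM A (kernelSubobject f) hglb hfam
    refine ⟨(W : C), (kernelSubobjectIso f).inv ≫ Subobject.ofLE _ _ hWess.1, W.arrow,
      aux_essMono f W hWess.1 hWess, hWds, hWfi, ?_⟩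
    rw [Category.assoc, Subobject.ofLE_arrow, kernelSubobject_arrow']
end
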